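/- Let q = p^e be a prime power and n₁, n₂ ≥ 1. Let M₁ ∈ Sym_{n₁}(ℤ/qℤ) and M₂ ∈ Sym_{n₂}(ℤ/qℤ) satisfy Cok_*^{(q)}(M₁) ≃ Cok_*^{(q)}(M₂). For i = 1, 2 and (ξ, z) ∈ (ℤ/qℤ)^{nᵢ} × (ℤ/qℤ), let Bᵢ(ξ, z) ∈ Sym_{nᵢ+1}(ℤ/qℤ) denote the bordered matrix with upper-left block Mᵢ, last column ξ, last row ξᵀ, and lower-right entry z. Then for every m ≥ 1 and every H ∈ Sym_m(ℤ/qℤ): q^{−(n₁+1)} · #{(ξ, z) ∈ (ℤ/qℤ)^{n₁} × (ℤ/qℤ) : Cok_*^{(q)}(B₁(ξ,z)) ≃ Cok_*^{(q)}(H)} = q^{−(n₂+1)} · #{(ξ, z) ∈ (ℤ/qℤ)^{n₂} × (ℤ/qℤ) : Cok_*^{(q)}(B₂(ξ,z)) ≃ Cok_*^{(q)}(H)}. -/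
import Mathlib


open Matrix MeasureTheory

/-- Congruence of square matrices over `R`: `B = U * A * Uᵀ` for some `U ∈ GL`. -/
def Matrix.Congruent {R : Type*} [CommRing R] {ι : Type*} [Fintype ι] [DecidableEq ι]
    (A B : Matrix ι ι R) : Prop :=
  ∃ U : (Matrix ι ι R)ˣ, (U : Matrix ι ι R) * A * (U : Matrix ι ι R)ᵀ = B

/-- Congruence of square matrices indexed by two (necessarily equipotent) index types. -/
def Matrix.CongruentTo {R : Type*} [CommRing R] {ι κ : Type*} [Fintype ι] [DecidableEq ι]
    [Fintype κ] [DecidableEq κ] (A : Matrix ι ι R) (B : Matrix κ κ R) : Prop :=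
  ∃ e : ι ≃ κ, (A.submatrix e.symm e.symm).Congruent B


/-- Isomorphism of cokernels with quasi-pairing: `Cok_*(H₁) ≃ Cok_*(H₂)` iff after adjoining
invertible symmetric blocks, the two block-diagonal matrices become congruent. -/
def QuasiPairedIso {q : ℕ} {ι κ : Type*} [Fintype ι] [DecidableEq ι] [Fintype κ] [DecidableEq κ]
    (H₁ : Matrix ι ι (ZMod q)) (H₂ : Matrix κ κ (ZMod q)) : Prop :=
  ∃ (k₁ k₂ : ℕ) (C₁ : Matrix (Fin k₁) (Fin k₁) (ZMod q)) (C₂ : Matrix (Fin k₂) (Fin k₂) (ZMod q)),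
    C₁.IsSymm ∧ IsUnit C₁.det ∧ C₂.IsSymm ∧ IsUnit C₂.det ∧
    (Matrix.fromBlocks C₁ 0 0 H₁).CongruentTo (Matrix.fromBlocks C₂ 0 0 H₂)

/-- The symmetric bordered matrix with upper-left block `M`, last column `ξ`, last row `ξᵀ`
and lower-right entry `z`. -/
def Matrix.border {R : Type*} [CommRing R] {n : ℕ} (M : Matrix (Fin n) (Fin n) R)
    (ξ : Fin n → R) (z : R) : Matrix (Fin n ⊕ Unit) (Fin n ⊕ Unit) R :=
  Matrix.fromBlocks M (Matrix.of fun i _ => ξ i) (Matrix.of fun _ j => ξ j)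
    (Matrix.of fun _ _ => z)

set_option linter.unusedSectionVars false
set_option linter.unusedVariables false

section basics
variable {R : Type*} [CommRing R] {ι κ μ : Type*} [Fintype ι] [DecidableEq ι]
  [Fintype κ] [DecidableEq κ] [Fintype μ] [DecidableEq μ]

lemma Matrix.congruent_of_isUnit {A B U : Matrix ι ι R} (hU : IsUnit U)
    (h : U * A * Uᵀ = B) : A.Congruent B := by
  refine ⟨hU.unit, ?_⟩
  simpa [hU.unit_spec] using h

lemma Matrix.Congruent.refl (A : Matrix ι ι R) : A.Congruent A :=
  ⟨1, by simp⟩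

lemma Matrix.Congruent.symm {A B : Matrix ι ι R} (h : A.Congruent B) : B.Congruent A := by
  obtain ⟨U, rfl⟩ := h
  refine ⟨U⁻¹, ?_⟩
  have h1 : (↑U⁻¹ : Matrix ι ι R) * (↑U : Matrix ι ι R) = 1 := U.inv_mul
  have h2 : (↑U : Matrix ι ι R)ᵀ * (↑U⁻¹ : Matrix ι ι R)ᵀ = 1 := by
    rw [← transpose_mul, U.inv_mul, transpose_one]
  calc (↑U⁻¹ : Matrix ι ι R) * ((↑U : Matrix ι ι R) * A * (↑U : Matrix ι ι R)ᵀ) * (↑U⁻¹ : Matrix ι ι R)ᵀ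
      = ((↑U⁻¹ : Matrix ι ι R) * (↑U : Matrix ι ι R)) * A * ((↑U : Matrix ι ι R)ᵀ * (↑U⁻¹ : Matrix ι ι R)ᵀ) := by
        simp only [mul_assoc]
    _ = A := by rw [h1, h2, one_mul, mul_one]

lemma Matrix.Congruent.trans {A B C : Matrix ι ι R} (h1 : A.Congruent B) (h2 : B.Congruent C) :
    A.Congruent C := by
  obtain ⟨U, rfl⟩ := h1
  obtain ⟨V, rfl⟩ := h2
  exact ⟨V * U, by simp only [Units.val_mul, Matrix.transpose_mul, mul_assoc]⟩

lemma Matrix.Congruent.submatrix {A B : Matrix ι ι R} (h : A.Congruent B) (f : κ ≃ ι) :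
    (A.submatrix f f).Congruent (B.submatrix f f) := by
  obtain ⟨U, rfl⟩ := h
  refine Matrix.congruent_of_isUnit (U := (U : Matrix ι ι R).submatrix f f) ?_ ?_
  · rw [Matrix.isUnit_iff_isUnit_det, Matrix.det_submatrix_equiv_self]
    exact (Matrix.isUnit_iff_isUnit_det _).1 U.isUnit
  · rw [Matrix.transpose_submatrix, Matrix.submatrix_mul_equiv, Matrix.submatrix_mul_equiv]

lemma Matrix.CongruentTo.of_congruent {A B : Matrix ι ι R} (h : A.Congruent B) :
    A.CongruentTo B := ⟨Equiv.refl ι, by simpa using h⟩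

lemma Matrix.congruentTo_of_eq {A : Matrix ι ι R} {B : Matrix κ κ R} (e : ι ≃ κ)
    (h : A.submatrix e.symm e.symm = B) : A.CongruentTo B := ⟨e, h ▸ Matrix.Congruent.refl _⟩

lemma Matrix.CongruentTo.refl (A : Matrix ι ι R) : A.CongruentTo A :=
  Matrix.congruentTo_of_eq (Equiv.refl ι) (by simp)

lemma Matrix.CongruentTo.symm {A : Matrix ι ι R} {B : Matrix κ κ R} (h : A.CongruentTo B) :
    B.CongruentTo A := by
  obtain ⟨e, hc⟩ := h
  refine ⟨e.symm, ?_⟩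
  have := (hc.symm).submatrix e
  simpa using this

lemma Matrix.CongruentTo.trans {A : Matrix ι ι R} {B : Matrix κ κ R} {C : Matrix μ μ R}
    (h1 : A.CongruentTo B) (h2 : B.CongruentTo C) : A.CongruentTo C := by
  obtain ⟨e, hc1⟩ := h1
  obtain ⟨f, hc2⟩ := h2
  refine ⟨e.trans f, ?_⟩
  have := (hc1.submatrix f.symm).trans hc2
  simpa [Matrix.submatrix_submatrix] using this

end basics

section blocks
variable {R : Type*} [CommRing R] {ι κ μ : Type*} [Fintype ι] [DecidableEq ι]
  [Fintype κ] [DecidableEq κ] [Fintype μ] [DecidableEq μ]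

lemma Matrix.fromBlocks_submatrix_sumCongr {γ : Type*} (C : Matrix γ γ R) (A : Matrix ι ι R)
    (e : κ ≃ ι) :
    (Matrix.fromBlocks C 0 0 A).submatrix (Equiv.sumCongr (Equiv.refl γ) e)
      (Equiv.sumCongr (Equiv.refl γ) e) =
      Matrix.fromBlocks C 0 0 (A.submatrix e e) := by
  ext i j
  rcases i with i | i <;> rcases j with j | j <;>
    simp [Matrix.submatrix, Matrix.fromBlocks]

lemma Matrix.CongruentTo.fromBlocks_right {γ : Type*} [Fintype γ] [DecidableEq γ]
    (C : Matrix γ γ R) {A : Matrix ι ι R} {B : Matrix κ κ R} (h : A.CongruentTo B) :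
    (Matrix.fromBlocks C 0 0 A).CongruentTo (Matrix.fromBlocks C 0 0 B) := by
  obtain ⟨e, W, hW⟩ := h
  refine ⟨Equiv.sumCongr (Equiv.refl γ) e, ?_⟩
  have hsub : (Matrix.fromBlocks C 0 0 A).submatrix (Equiv.sumCongr (Equiv.refl γ) e).symm
      (Equiv.sumCongr (Equiv.refl γ) e).symm
      = Matrix.fromBlocks C 0 0 (A.submatrix e.symm e.symm) := by
    simpa using Matrix.fromBlocks_submatrix_sumCongr C A e.symm
  rw [hsub]
  refine Matrix.congruent_of_isUnit
    (U := Matrix.fromBlocks 1 0 0 (W : Matrix κ κ R)) ?_ ?_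
  · rw [Matrix.isUnit_iff_isUnit_det, Matrix.det_fromBlocks_zero₂₁]
    simp only [Matrix.det_one, one_mul]
    exact (Matrix.isUnit_iff_isUnit_det _).1 W.isUnit
  · rw [Matrix.fromBlocks_transpose, Matrix.fromBlocks_multiply, Matrix.fromBlocks_multiply]
    rw [← hW]
    congr 1 <;> simp

end blocks

section shuffle
variable {R : Type*} [CommRing R] {ι : Type*} [Fintype ι] [DecidableEq ι]

/-- Packing of a block-diagonal of two `Fin`-indexed matrices into a single `Fin`. -/
def packBlocks {k l : ℕ} (C : Matrix (Fin k) (Fin k) R) (D : Matrix (Fin l) (Fin l) R) :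
    Matrix (Fin (k + l)) (Fin (k + l)) R :=
  (Matrix.fromBlocks C 0 0 D).submatrix finSumFinEquiv.symm finSumFinEquiv.symm

lemma packBlocks_isSymm {k l : ℕ} {C : Matrix (Fin k) (Fin k) R} {D : Matrix (Fin l) (Fin l) R}
    (hC : C.IsSymm) (hD : D.IsSymm) : (packBlocks C D).IsSymm := by
  unfold Matrix.IsSymm packBlocks at *
  rw [Matrix.transpose_submatrix, Matrix.fromBlocks_transpose]
  simp [hC, hD]

lemma packBlocks_det_isUnit {k l : ℕ} {C : Matrix (Fin k) (Fin k) R}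
    {D : Matrix (Fin l) (Fin l) R} (hC : IsUnit C.det) (hD : IsUnit D.det) :
    IsUnit (packBlocks C D).det := by
  unfold packBlocks
  rw [Matrix.det_submatrix_equiv_self, Matrix.det_fromBlocks_zero₂₁]
  exact hC.mul hD

lemma congruentTo_assoc {k l : ℕ} (C : Matrix (Fin k) (Fin k) R) (D : Matrix (Fin l) (Fin l) R)
    (A : Matrix ι ι R) :
    (Matrix.fromBlocks C 0 0 (Matrix.fromBlocks D 0 0 A)).CongruentTo
      (Matrix.fromBlocks (packBlocks C D) 0 0 A) := by
  refine Matrix.congruentTo_of_eq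
    ((Equiv.sumAssoc (Fin k) (Fin l) ι).symm.trans
      (Equiv.sumCongr finSumFinEquiv (Equiv.refl ι))) ?_
  ext i j
  rcases i with a | a <;> rcases j with b | b
  · rcases h1 : finSumFinEquiv.symm a with c | c <;> rcases h2 : finSumFinEquiv.symm b with d | d <;>
      simp [packBlocks, Equiv.sumAssoc, h1, h2, Matrix.fromBlocks]
  · rcases h1 : finSumFinEquiv.symm a with c | c <;>
      simp [packBlocks, Equiv.sumAssoc, h1, Matrix.fromBlocks]
  · rcases h2 : finSumFinEquiv.symm b with d | d <;>
      simp [packBlocks, Equiv.sumAssoc, h2, Matrix.fromBlocks]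
  · simp [Equiv.sumAssoc, Matrix.fromBlocks]

lemma congruentTo_swap {γ δ : Type*} [Fintype γ] [DecidableEq γ] [Fintype δ] [DecidableEq δ]
    (C : Matrix γ γ R) (D : Matrix δ δ R) (A : Matrix ι ι R) :
    (Matrix.fromBlocks C 0 0 (Matrix.fromBlocks D 0 0 A)).CongruentTo
      (Matrix.fromBlocks D 0 0 (Matrix.fromBlocks C 0 0 A)) := by
  refine Matrix.congruentTo_of_eq
    ((Equiv.sumAssoc γ δ ι).symm.trans
      (((Equiv.sumComm γ δ).sumCongr (Equiv.refl ι)).trans (Equiv.sumAssoc δ γ ι))) ?_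
  ext i j
  rcases i with a | a | a <;> rcases j with b | b | b <;>
    simp [Equiv.sumAssoc, Equiv.sumComm, Matrix.fromBlocks]

end shuffle


section qpi
variable {q : ℕ} {ι κ μ : Type*} [Fintype ι] [DecidableEq ι] [Fintype κ] [DecidableEq κ]
  [Fintype μ] [DecidableEq μ]

lemma QuasiPairedIso.congr_left {A : Matrix ι ι (ZMod q)} {B : Matrix κ κ (ZMod q)}
    {H : Matrix μ μ (ZMod q)} (h : A.CongruentTo B) :
    QuasiPairedIso A H ↔ QuasiPairedIso B H := by
  constructor
  · rintro ⟨k₁, k₂, C₁, C₂, hC₁, hC₁d, hC₂, hC₂d, hc⟩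
    exact ⟨k₁, k₂, C₁, C₂, hC₁, hC₁d, hC₂, hC₂d,
      ((h.symm.fromBlocks_right C₁).trans hc)⟩
  · rintro ⟨k₁, k₂, C₁, C₂, hC₁, hC₁d, hC₂, hC₂d, hc⟩
    exact ⟨k₁, k₂, C₁, C₂, hC₁, hC₁d, hC₂, hC₂d,
      ((h.fromBlocks_right C₁).trans hc)⟩

lemma quasiPairedIso_fromBlocks_left {k : ℕ} {C : Matrix (Fin k) (Fin k) (ZMod q)}
    (hC : C.IsSymm) (hCd : IsUnit C.det) (A : Matrix ι ι (ZMod q)) (H : Matrix μ μ (ZMod q)) :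
    QuasiPairedIso (Matrix.fromBlocks C 0 0 A) H ↔ QuasiPairedIso A H := by
  constructor
  · rintro ⟨k₁, k₂, C₁, C₂, hC₁, hC₁d, hC₂, hC₂d, hc⟩
    refine ⟨k₁ + k, k₂, packBlocks C₁ C, C₂, packBlocks_isSymm hC₁ hC,
      packBlocks_det_isUnit hC₁d hCd, hC₂, hC₂d, ?_⟩
    exact (congruentTo_assoc C₁ C A).symm.trans hc
  · rintro ⟨k₁, k₂, C₁, C₂, hC₁, hC₁d, hC₂, hC₂d, hc⟩
    refine ⟨k₁, k + k₂, C₁, packBlocks C C₂, hC₁, hC₁d, packBlocks_isSymm hC hC₂,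
      packBlocks_det_isUnit hCd hC₂d, ?_⟩
    exact ((congruentTo_swap C₁ C A).trans
      ((hc.fromBlocks_right C))).trans (congruentTo_assoc C C₂ H)

end qpi

section border
variable {R : Type*} [CommRing R] {ι κ : Type*} [Fintype ι] [DecidableEq ι]
  [Fintype κ] [DecidableEq κ]

/-- column vector as `ι × Unit` matrix -/
def colV (v : ι → R) : Matrix ι Unit R := Matrix.of fun i _ => v i
/-- row vector as `Unit × ι` matrix -/
def rowV (v : ι → R) : Matrix Unit ι R := Matrix.of fun _ j => v j
/-- scalar as `Unit × Unit` matrix -/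
def cornerM (z : R) : Matrix Unit Unit R := Matrix.of fun _ _ => z

/-- generalized bordered matrix -/
def bord (A : Matrix ι ι R) (ξ : ι → R) (z : R) : Matrix (ι ⊕ Unit) (ι ⊕ Unit) R :=
  Matrix.fromBlocks A (colV ξ) (rowV ξ) (cornerM z)

@[simp] lemma mul_colV (A : Matrix ι ι R) (v : ι → R) : A * colV v = colV (A.mulVec v) := by
  ext i j; simp [colV, Matrix.mul_apply, Matrix.mulVec, dotProduct]

@[simp] lemma rowV_mul (A : Matrix ι ι R) (v : ι → R) : rowV v * A = rowV (Matrix.vecMul v A) := by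
  ext i j; simp [rowV, Matrix.mul_apply, Matrix.vecMul, dotProduct]

@[simp] lemma rowV_mul_colV (u v : ι → R) : rowV u * colV v = cornerM (u ⬝ᵥ v) := by
  ext i j; simp [rowV, colV, cornerM, Matrix.mul_apply, dotProduct]

@[simp] lemma cornerM_mul_one (z : R) : cornerM z * (1 : Matrix Unit Unit R) = cornerM z :=
  mul_one _

@[simp] lemma colV_transpose (v : ι → R) : (colV v)ᵀ = rowV v := rfl
@[simp] lemma rowV_transpose (v : ι → R) : (rowV v)ᵀ = colV v := rfl
@[simp] lemma cornerM_transpose (z : R) : (cornerM z)ᵀ = cornerM z := rfl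

lemma bord_congruent_unit {A : Matrix ι ι R} {U : Matrix ι ι R} (hU : IsUnit U)
    (ξ : ι → R) (z : R) :
    (bord A ξ z).Congruent (bord (U * A * Uᵀ) (U.mulVec ξ) z) := by
  refine Matrix.congruent_of_isUnit
    (U := Matrix.fromBlocks U 0 0 (1 : Matrix Unit Unit R)) ?_ ?_
  · rw [Matrix.isUnit_iff_isUnit_det, Matrix.det_fromBlocks_zero₂₁]
    simpa using (Matrix.isUnit_iff_isUnit_det _).1 hU
  · rw [bord, bord, Matrix.fromBlocks_transpose, Matrix.fromBlocks_multiply,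
      Matrix.fromBlocks_multiply]
    rw [Matrix.fromBlocks_inj]
    refine ⟨by simp [Matrix.mul_assoc], by simp, ?_, by simp⟩
    simp only [Matrix.zero_mul, Matrix.mul_zero, add_zero, zero_add, Matrix.one_mul,
      rowV_mul, Matrix.vecMul_transpose, Matrix.transpose_zero]

lemma bord_congruentTo_reindex (A : Matrix ι ι R) (e : ι ≃ κ) (ξ : ι → R) (z : R) :
    (bord A ξ z).CongruentTo (bord (A.submatrix e.symm e.symm) (ξ ∘ e.symm) z) := by
  refine Matrix.congruentTo_of_eq (Equiv.sumCongr e (Equiv.refl Unit)) ?_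
  ext i j
  rcases i with a | a <;> rcases j with b | b <;>
    simp [bord, Matrix.fromBlocks, colV, rowV, cornerM]

lemma bord_congruent_translate {A : Matrix ι ι R} (hA : A.IsSymm) (c ξ : ι → R) (z : R) :
    (bord A ξ z).Congruent
      (bord A (ξ + A.mulVec c) (z + c ⬝ᵥ A.mulVec c + c ⬝ᵥ ξ + ξ ⬝ᵥ c)) := by
  refine Matrix.congruent_of_isUnit
    (U := Matrix.fromBlocks 1 0 (rowV c) (1 : Matrix Unit Unit R)) ?_ ?_
  · rw [Matrix.isUnit_iff_isUnit_det, Matrix.det_fromBlocks_zero₁₂]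
    simp
  · rw [bord, bord, Matrix.fromBlocks_transpose, Matrix.fromBlocks_multiply,
      Matrix.fromBlocks_multiply]
    have hvm : Matrix.vecMul c A = A.mulVec c := by
      rw [← Matrix.mulVec_transpose, hA]
    rw [Matrix.fromBlocks_inj]
    refine ⟨by simp, ?_, ?_, ?_⟩
    · simp only [Matrix.one_mul, Matrix.zero_mul, add_zero, Matrix.mul_zero, mul_colV,
        Matrix.mul_one, zero_add]
      ext i j
      simp [colV, Matrix.mul_apply, Matrix.mulVec, dotProduct, add_comm]
    · simp only [rowV_mul, Matrix.one_mul, Matrix.mul_one, Matrix.mul_zero, Matrix.zero_mul,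
        add_zero, zero_add, hvm]
      ext i j
      simp [rowV, add_comm]
    · simp only [rowV_mul, Matrix.one_mul, Matrix.mul_one, Matrix.mul_zero, Matrix.zero_mul,
        add_zero, zero_add, hvm, rowV_mul_colV, cornerM_mul_one, Matrix.add_mul]
      ext i j
      simp [cornerM, Matrix.mul_apply, Matrix.add_apply, rowV, colV, Matrix.of_apply,
        Matrix.transpose_apply, Matrix.one_apply, dotProduct, mul_comm]
      ring

end border

section key
variable {R : Type*} [CommRing R] {ι γ : Type*} [Fintype ι] [DecidableEq ι]
  [Fintype γ] [DecidableEq γ]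

lemma isSymm_fromBlocks_diag {C : Matrix γ γ R} {M : Matrix ι ι R}
    (hC : C.IsSymm) (hM : M.IsSymm) : (Matrix.fromBlocks C 0 0 M).IsSymm := by
  unfold Matrix.IsSymm at *
  rw [Matrix.fromBlocks_transpose, hC, hM]
  simp

lemma bord_zero_left_congruentTo (C : Matrix γ γ R) (M : Matrix ι ι R) (ξ : ι → R) (z : R) :
    (bord (Matrix.fromBlocks C 0 0 M) (Sum.elim 0 ξ) z).CongruentTo
      (Matrix.fromBlocks C 0 0 (bord M ξ z)) := by
  refine Matrix.congruentTo_of_eq (Equiv.sumAssoc γ ι Unit) ?_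
  ext i j
  rcases i with a | a | a <;> rcases j with b | b | b <;>
    simp [bord, Matrix.fromBlocks, Equiv.sumAssoc, colV, rowV, cornerM]

lemma key_congruentTo {C : Matrix γ γ R} (hC : C.IsSymm) (hCd : IsUnit C.det)
    {M : Matrix ι ι R} (hM : M.IsSymm) (η : γ → R) (ξ : ι → R) (z : R) :
    (bord (Matrix.fromBlocks C 0 0 M) (Sum.elim η ξ) z).CongruentTo
      (Matrix.fromBlocks C 0 0 (bord M ξ (z - η ⬝ᵥ C⁻¹.mulVec η))) := by
  have hsymm : (Matrix.fromBlocks C 0 0 M).IsSymm := isSymm_fromBlocks_diag hC hM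
  have step1 := bord_congruent_translate hsymm
    (Sum.elim (-(C⁻¹.mulVec η)) 0) (Sum.elim η ξ) z
  have hmv : (Matrix.fromBlocks C 0 0 M).mulVec (Sum.elim (-(C⁻¹.mulVec η)) 0)
      = Sum.elim (-η) 0 := by
    rw [Matrix.fromBlocks_mulVec]
    have : C.mulVec (-(C⁻¹.mulVec η)) = -η := by
      rw [Matrix.mulVec_neg, Matrix.mulVec_mulVec, Matrix.mul_nonsing_inv _ hCd,
        Matrix.one_mulVec]
    simp [this]
  rw [hmv] at step1
  have hξ : Sum.elim η ξ + Sum.elim (-η) 0 = Sum.elim (0 : γ → R) ξ := by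
    funext i; rcases i with i | i <;> simp
  have hz : z + Sum.elim (-(C⁻¹.mulVec η)) (0 : ι → R) ⬝ᵥ Sum.elim (-η) (0 : ι → R)
      + Sum.elim (-(C⁻¹.mulVec η)) (0 : ι → R) ⬝ᵥ Sum.elim η ξ
      + Sum.elim η ξ ⬝ᵥ Sum.elim (-(C⁻¹.mulVec η)) (0 : ι → R)
      = z - η ⬝ᵥ C⁻¹.mulVec η := by
    rw [sumElim_dotProduct_sumElim, sumElim_dotProduct_sumElim,
      sumElim_dotProduct_sumElim]
    simp [dotProduct_comm]
    ring
  rw [hξ, hz] at step1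
  exact (Matrix.CongruentTo.of_congruent step1).trans
    (bord_zero_left_congruentTo C M ξ (z - η ⬝ᵥ C⁻¹.mulVec η))

end key

section counting
variable {q : ℕ} {ι κ γ μ : Type*} [Fintype ι] [DecidableEq ι] [Fintype κ] [DecidableEq κ]
  [Fintype γ] [DecidableEq γ] [Fintype μ] [DecidableEq μ]

/-- multiplication by an invertible matrix as an equivalence on vectors -/
def mulVecEquiv {R : Type*} [CommRing R] (W : (Matrix κ κ R)ˣ) : (κ → R) ≃ (κ → R) where
  toFun v := (W : Matrix κ κ R).mulVec v
  invFun v := ((W⁻¹ : (Matrix κ κ R)ˣ) : Matrix κ κ R).mulVec v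
  left_inv v := by
    show ((W⁻¹ : (Matrix κ κ R)ˣ) : Matrix κ κ R).mulVec ((W : Matrix κ κ R).mulVec v) = v
    rw [Matrix.mulVec_mulVec]
    rw [show ((W⁻¹ : (Matrix κ κ R)ˣ) : Matrix κ κ R) * (W : Matrix κ κ R) = 1 from W.inv_mul]
    exact Matrix.one_mulVec v
  right_inv v := by
    show (W : Matrix κ κ R).mulVec (((W⁻¹ : (Matrix κ κ R)ˣ) : Matrix κ κ R).mulVec v) = v
    rw [Matrix.mulVec_mulVec]
    rw [show (W : Matrix κ κ R) * ((W⁻¹ : (Matrix κ κ R)ˣ) : Matrix κ κ R) = 1 from W.mul_inv]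
    exact Matrix.one_mulVec v

lemma card_bord_congruentTo {A : Matrix ι ι (ZMod q)} {B : Matrix κ κ (ZMod q)}
    (h : A.CongruentTo B) (H : Matrix μ μ (ZMod q)) :
    Nat.card {ω : (ι → ZMod q) × ZMod q // QuasiPairedIso (bord A ω.1 ω.2) H} =
    Nat.card {ω : (κ → ZMod q) × ZMod q // QuasiPairedIso (bord B ω.1 ω.2) H} := by
  obtain ⟨e, W, hW⟩ := h
  refine Nat.card_congr (Equiv.subtypeEquiv
    (Equiv.prodCongr ((Equiv.arrowCongr e (Equiv.refl (ZMod q))).trans (mulVecEquiv W))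
      (Equiv.refl (ZMod q))) ?_)
  rintro ⟨ξ, z⟩
  have c1 := bord_congruentTo_reindex A e ξ z
  have c2 := Matrix.CongruentTo.of_congruent
    (bord_congruent_unit (A := A.submatrix e.symm e.symm) (U := (W : Matrix κ κ (ZMod q)))
      W.isUnit (ξ ∘ e.symm) z)
  rw [hW] at c2
  exact QuasiPairedIso.congr_left (c1.trans c2)

/-- split equivalence for the bordered counting argument -/
def splitEquiv {R : Type*} [CommRing R] [Fintype γ] (N : Matrix γ γ R) :
    ((γ ⊕ ι) → R) × R ≃ (γ → R) × ((ι → R) × R) where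
  toFun x := (x.1 ∘ Sum.inl, (x.1 ∘ Sum.inr,
    x.2 - (x.1 ∘ Sum.inl) ⬝ᵥ N.mulVec (x.1 ∘ Sum.inl)))
  invFun y := (Sum.elim y.1 y.2.1, y.2.2 + y.1 ⬝ᵥ N.mulVec y.1)
  left_inv x := by
    refine Prod.ext ?_ ?_
    · exact Sum.elim_comp_inl_inr x.1
    · simp
  right_inv y := by
    refine Prod.ext ?_ (Prod.ext ?_ ?_)
    · rfl
    · rfl
    · show (y.2.2 + y.1 ⬝ᵥ N.mulVec y.1) - _ = y.2.2
      simp [Sum.elim_comp_inl]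

/-- a subtype of a product depending on the second factor -/
def sndSubtypeEquiv {α β : Type*} {p : β → Prop} : {x : α × β // p x.2} ≃ α × {b // p b} where
  toFun x := (x.1.1, ⟨x.1.2, x.2⟩)
  invFun y := ⟨(y.1, y.2.1), y.2.2⟩
  left_inv := fun ⟨⟨a, b⟩, h⟩ => rfl
  right_inv := fun ⟨a, b, h⟩ => rfl

lemma card_bord_fromBlocks {C : Matrix γ γ (ZMod q)} (hC : C.IsSymm) (hCd : IsUnit C.det)
    {M : Matrix ι ι (ZMod q)} (hM : M.IsSymm) (H : Matrix μ μ (ZMod q))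
    (hqpi : ∀ (z' : ZMod q) (ξ : ι → ZMod q),
      QuasiPairedIso (Matrix.fromBlocks C 0 0 (bord M ξ z')) H ↔
      QuasiPairedIso (bord M ξ z') H) :
    Nat.card {ω : ((γ ⊕ ι) → ZMod q) × ZMod q //
        QuasiPairedIso (bord (Matrix.fromBlocks C 0 0 M) ω.1 ω.2) H} =
    Nat.card (γ → ZMod q) *
      Nat.card {ω : (ι → ZMod q) × ZMod q // QuasiPairedIso (bord M ω.1 ω.2) H} := by
  have hpred : ∀ ω : ((γ ⊕ ι) → ZMod q) × ZMod q,
      QuasiPairedIso (bord (Matrix.fromBlocks C 0 0 M) ω.1 ω.2) H ↔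
      QuasiPairedIso (bord M (ω.1 ∘ Sum.inr)
        (ω.2 - (ω.1 ∘ Sum.inl) ⬝ᵥ C⁻¹.mulVec (ω.1 ∘ Sum.inl))) H := by
    rintro ⟨v, z⟩
    have hv : v = Sum.elim (v ∘ Sum.inl) (v ∘ Sum.inr) := (Sum.elim_comp_inl_inr v).symm
    conv_lhs => rw [hv]
    exact (QuasiPairedIso.congr_left
      (key_congruentTo hC hCd hM (v ∘ Sum.inl) (v ∘ Sum.inr) z)).trans (hqpi _ _)
  rw [← Nat.card_prod]
  exact Nat.card_congr ((Equiv.subtypeEquiv (splitEquiv C⁻¹) hpred).trans sndSubtypeEquiv)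

end counting


lemma Matrix.border_eq_bord {R : Type*} [CommRing R] {n : ℕ} (M : Matrix (Fin n) (Fin n) R)
    (ξ : Fin n → R) (z : R) : M.border ξ z = bord M ξ z := rfl

/-- Let `q = p^e` be a prime power and `M₁ ∈ Sym_{n₁}(ℤ/qℤ)`,
`M₂ ∈ Sym_{n₂}(ℤ/qℤ)` with `Cok_*^{(q)}(M₁) ≃ Cok_*^{(q)}(M₂)`. Then for uniformly random
borders `(ξ, z)`, the probabilities that the bordered matrix has a given cokernel with
quasi-pairing agree. -/
theorem stmt_16 {p e : ℕ} (hp : p.Prime) (he : 1 ≤ e) {n₁ n₂ : ℕ} (h₁ : 1 ≤ n₁) (h₂ : 1 ≤ n₂)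
    (M₁ : Matrix (Fin n₁) (Fin n₁) (ZMod (p ^ e))) (hs₁ : M₁.IsSymm)
    (M₂ : Matrix (Fin n₂) (Fin n₂) (ZMod (p ^ e))) (hs₂ : M₂.IsSymm)
    (hq : QuasiPairedIso M₁ M₂) :
    ∀ (m : ℕ), 1 ≤ m → ∀ H : Matrix (Fin m) (Fin m) (ZMod (p ^ e)), H.IsSymm →
      (Nat.card {ω : (Fin n₁ → ZMod (p ^ e)) × ZMod (p ^ e) //
          QuasiPairedIso (M₁.border ω.1 ω.2) H} : ℚ) / ((p : ℚ) ^ e) ^ (n₁ + 1) =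
      (Nat.card {ω : (Fin n₂ → ZMod (p ^ e)) × ZMod (p ^ e) //
          QuasiPairedIso (M₂.border ω.1 ω.2) H} : ℚ) / ((p : ℚ) ^ e) ^ (n₂ + 1) := by
  intro m hm H hH
  obtain ⟨k₁, k₂, C₁, C₂, hC₁, hC₁d, hC₂, hC₂d, hcong⟩ := hq
  simp only [Matrix.border_eq_bord]
  let R := ZMod (p ^ e)
  let N₁ : ℕ := Nat.card {ω : (Fin n₁ → R) × R // QuasiPairedIso (bord M₁ ω.1 ω.2) H}
  let N₂ : ℕ := Nat.card {ω : (Fin n₂ → R) × R // QuasiPairedIso (bord M₂ ω.1 ω.2) H}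
  show (N₁ : ℚ) / _ = (N₂ : ℚ) / _
  -- count for the enlarged matrices
  have hA1 : Nat.card {ω : ((Fin k₁ ⊕ Fin n₁) → R) × R //
      QuasiPairedIso (bord (Matrix.fromBlocks C₁ 0 0 M₁) ω.1 ω.2) H} =
      Nat.card (Fin k₁ → R) * N₁ :=
    card_bord_fromBlocks hC₁ hC₁d hs₁ H
      (fun z' ξ => quasiPairedIso_fromBlocks_left hC₁ hC₁d _ H)
  have hA2 : Nat.card {ω : ((Fin k₂ ⊕ Fin n₂) → R) × R //
      QuasiPairedIso (bord (Matrix.fromBlocks C₂ 0 0 M₂) ω.1 ω.2) H} =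
      Nat.card (Fin k₂ → R) * N₂ :=
    card_bord_fromBlocks hC₂ hC₂d hs₂ H
      (fun z' ξ => quasiPairedIso_fromBlocks_left hC₂ hC₂d _ H)
  have hAA : Nat.card {ω : ((Fin k₁ ⊕ Fin n₁) → R) × R //
      QuasiPairedIso (bord (Matrix.fromBlocks C₁ 0 0 M₁) ω.1 ω.2) H} =
      Nat.card {ω : ((Fin k₂ ⊕ Fin n₂) → R) × R //
      QuasiPairedIso (bord (Matrix.fromBlocks C₂ 0 0 M₂) ω.1 ω.2) H} :=
    card_bord_congruentTo hcong H
  -- index sizes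
  have hk : k₁ + n₁ = k₂ + n₂ := by
    obtain ⟨e', -⟩ := hcong
    have := Fintype.card_congr e'
    simpa using this
  -- cardinality of function spaces
  have hcardR : Nat.card R = p ^ e := Nat.card_zmod _
  have hfun : ∀ k : ℕ, Nat.card (Fin k → R) = (p ^ e) ^ k := by
    intro k
    rw [Nat.card_fun, hcardR, Nat.card_eq_fintype_card, Fintype.card_fin]
  -- the master counting identity over ℕ
  have hmain : (p ^ e) ^ k₁ * N₁ = (p ^ e) ^ k₂ * N₂ := by
    rw [← hfun, ← hfun, ← hA1, ← hA2, hAA]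
  -- pass to ℚ
  have hQ : ((p : ℚ) ^ e) ≠ 0 :=
    pow_ne_zero _ (Nat.cast_ne_zero.mpr hp.pos.ne')
  have hmainQ : ((p : ℚ) ^ e) ^ k₁ * (N₁ : ℚ) = ((p : ℚ) ^ e) ^ k₂ * (N₂ : ℚ) := by
    have := congrArg (fun n : ℕ => (n : ℚ)) hmain
    push_cast at this
    exact this
  rw [div_eq_div_iff (pow_ne_zero _ hQ) (pow_ne_zero _ hQ)]
  have hcancel := pow_ne_zero k₁ hQ
  apply mul_left_cancel₀ hcancel
  calc ((p : ℚ) ^ e) ^ k₁ * ((N₁ : ℚ) * ((p : ℚ) ^ e) ^ (n₂ + 1))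
      = (((p : ℚ) ^ e) ^ k₁ * (N₁ : ℚ)) * ((p : ℚ) ^ e) ^ (n₂ + 1) := by ring
    _ = (((p : ℚ) ^ e) ^ k₂ * (N₂ : ℚ)) * ((p : ℚ) ^ e) ^ (n₂ + 1) := by rw [hmainQ]
    _ = (N₂ : ℚ) * ((p : ℚ) ^ e) ^ (k₂ + n₂ + 1) := by ring
    _ = (N₂ : ℚ) * ((p : ℚ) ^ e) ^ (k₁ + n₁ + 1) := by rw [hk]
    _ = ((p : ℚ) ^ e) ^ k₁ * ((N₂ : ℚ) * ((p : ℚ) ^ e) ^ (n₁ + 1)) := by ring
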